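/- Let p_n = C n^{-τ} (suitably normalized) be a power-law distribution on positive integers with exponent τ > 1, so that p_{n+} := Σ_{k≥n} p_k satisfies p_{n+} ≥ c n^{-(τ-1)} for a constant c > 0. Then the sum Σ_{n=1}^∞ (Σ_{i=1}^n p_{i+}^{-1/d}) p_n diverges whenever τ ≤ (2d-1)/(d-1) (for d ≥ 2). -/

import Mathlib

/-!
A power law `p_k = C k^{-τ}` has tail `p_{n+} ≤ p_n + C ∫_n^∞ x^{-τ} dx ≤ K n^{1-τ}`, hence
`p_{i+}^{-s} ≥ K^{-s} i^{(τ-1)s}`. Keeping only the indices `i > n/2` of the inner sum gives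
`Σ_{i ≤ n} p_{i+}^{-s} ≳ n^{(τ-1)s+1}`, so the `n`-th term is `≳ n^{(τ-1)s+1-τ}`, which dominates
`1/n` as soon as `τ - 2 ≤ (τ-1)s`. For `s = 1/d` this is `τ ≤ (2d-1)/(d-1)`, and the series
diverges by comparison with the harmonic series.
-/

open Finset Real

/-- The paper's `p_{n+}`. -/
noncomputable def tailSum (p : ℕ → ℝ) (n : ℕ) : ℝ := ∑' k, if n ≤ k then p k else 0

lemma tailSum_eq_tsum_add (p : ℕ → ℝ) (n : ℕ) : tailSum p n = ∑' k, p (k + n) := by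
  rw [tailSum, ← (add_left_injective n).tsum_eq]
  · simp
  · intro k hk
    simp only [Function.mem_support, ne_eq, ite_eq_right_iff, Classical.not_imp] at hk
    exact ⟨k - n, Nat.sub_add_cancel hk.1⟩

lemma tailSum_eq_add_tsum {p : ℕ → ℝ} (hp : Summable p) (n : ℕ) :
    tailSum p n = p n + ∑' k, p (k + n + 1) := by
  rw [tailSum_eq_tsum_add, ((summable_nat_add_iff n).mpr hp).tsum_eq_zero_add]
  simp only [zero_add, add_right_comm]

lemma half_rpow_le_sum_Icc_rpow {a : ℝ} (ha : 0 ≤ a) (n : ℕ) :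
    ((n : ℝ) / 2) ^ (a + 1) ≤ ∑ i ∈ Icc 1 n, (i : ℝ) ^ a := by
  have hcard : (n : ℝ) / 2 ≤ #(Icc (n / 2 + 1) n) := by
    rw [Nat.card_Icc, div_le_iff₀ two_pos]
    exact_mod_cast (by omega : n ≤ (n + 1 - (n / 2 + 1)) * 2)
  have hge : ∀ i ∈ Icc (n / 2 + 1) n, ((n : ℝ) / 2) ^ a ≤ (i : ℝ) ^ a := by
    intro i hi
    have : (n : ℝ) ≤ i * 2 := by exact_mod_cast (by grind : n ≤ i * 2)
    gcongr
    linarith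
  calc ((n : ℝ) / 2) ^ (a + 1) = (n / 2) * ((n : ℝ) / 2) ^ a := by
        rw [rpow_add_one' (by positivity) (by linarith), mul_comm]
    _ ≤ #(Icc (n / 2 + 1) n) * ((n : ℝ) / 2) ^ a := by gcongr
    _ ≤ ∑ i ∈ Icc (n / 2 + 1) n, (i : ℝ) ^ a := by
        simpa using card_nsmul_le_sum _ _ _ hge
    _ ≤ ∑ i ∈ Icc 1 n, (i : ℝ) ^ a :=
        sum_le_sum_of_subset_of_nonneg (Icc_subset_Icc_left (by omega))
          fun _ _ _ => by positivity

lemma tsum_rpow_nat_add_le {τ : ℝ} (hτ : 1 < τ) {n : ℕ} (hn : 0 < n) :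
    ∑' k : ℕ, ((k + n + 1 : ℕ) : ℝ) ^ (-τ) ≤ (n : ℝ) ^ (1 - τ) / (τ - 1) := by
  have hn' : (0 : ℝ) < n := by exact_mod_cast hn
  have hint := integral_Ioi_rpow_of_lt (by linarith : -τ < -1) hn'
  calc ∑' k : ℕ, ((k + n + 1 : ℕ) : ℝ) ^ (-τ) ≤ ∫ x in Set.Ioi (n : ℝ), x ^ (-τ) :=
        AntitoneOn.tsum_comp_add_le_integral n
          ((antitoneOn_rpow_Ioi_of_exponent_nonpos (by linarith)).mono
            fun x hx => hn'.trans_le hx)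
          (integrableOn_Ioi_rpow_of_lt (by linarith) hn')
          fun x hx => by have : (0 : ℝ) < x := hn'.trans hx; positivity
    _ = (n : ℝ) ^ (1 - τ) / (τ - 1) := by
        rw [hint, show -τ + 1 = 1 - τ by ring, neg_div, ← div_neg, neg_sub]

section PowerLaw

variable {τ C : ℝ} {p : ℕ → ℝ}

lemma summable_of_eq_mul_rpow (hτ : 1 < τ) (hp : ∀ n : ℕ, 1 ≤ n → p n = C * (n : ℝ) ^ (-τ)) :
    Summable p := by
  rw [← summable_nat_add_iff 1]
  have hpow : Summable fun n : ℕ => C * ((n + 1 : ℕ) : ℝ) ^ (-τ) :=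
    ((summable_nat_add_iff 1).mpr (summable_nat_rpow.mpr (by linarith))).mul_left C
  exact hpow.congr fun n => (hp (n + 1) (by omega)).symm

variable (hτ : 1 < τ) (hC : 0 < C) (hp : ∀ n : ℕ, 1 ≤ n → p n = C * (n : ℝ) ^ (-τ))
include hτ hC hp

lemma tailSum_pos {n : ℕ} (hn : 0 < n) : 0 < tailSum p n := by
  rw [tailSum_eq_add_tsum (summable_of_eq_mul_rpow hτ hp), hp n hn]
  have : 0 ≤ ∑' k, p (k + n + 1) := tsum_nonneg fun k => by rw [hp _ (by omega)]; positivity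
  positivity

lemma tailSum_le {n : ℕ} (hn : 0 < n) :
    tailSum p n ≤ C * τ / (τ - 1) * (n : ℝ) ^ (1 - τ) := by
  have hn' : (1 : ℝ) ≤ n := by exact_mod_cast hn
  have hτ' : 0 < τ - 1 := by linarith
  have hhead : (n : ℝ) ^ (-τ) ≤ (n : ℝ) ^ (1 - τ) := rpow_le_rpow_of_exponent_le hn' (by linarith)
  have htail : ∑' k, p (k + n + 1) ≤ C * ((n : ℝ) ^ (1 - τ) / (τ - 1)) := by
    rw [tsum_congr fun k => hp (k + n + 1) (by omega), tsum_mul_left]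
    gcongr
    exact tsum_rpow_nat_add_le hτ hn
  rw [tailSum_eq_add_tsum (summable_of_eq_mul_rpow hτ hp), hp n hn]
  calc C * (n : ℝ) ^ (-τ) + ∑' k, p (k + n + 1)
      ≤ C * (n : ℝ) ^ (1 - τ) + C * ((n : ℝ) ^ (1 - τ) / (τ - 1)) := by gcongr
    _ = C * τ / (τ - 1) * (n : ℝ) ^ (1 - τ) := by field_simp; ring

lemma rpow_le_tailSum_rpow {s : ℝ} (hs : 0 ≤ s) {n : ℕ} (hn : 0 < n) :
    (C * τ / (τ - 1)) ^ (-s) * (n : ℝ) ^ ((τ - 1) * s) ≤ tailSum p n ^ (-s) := by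
  have hK : 0 ≤ C * τ / (τ - 1) := div_nonneg (by positivity) (by linarith)
  calc (C * τ / (τ - 1)) ^ (-s) * (n : ℝ) ^ ((τ - 1) * s)
      = (C * τ / (τ - 1) * (n : ℝ) ^ (1 - τ)) ^ (-s) := by
        rw [mul_rpow hK (by positivity), ← rpow_mul (by positivity)]
        ring_nf
    _ ≤ tailSum p n ^ (-s) :=
        rpow_le_rpow_of_nonpos (tailSum_pos hτ hC hp hn) (tailSum_le hτ hC hp hn) (by linarith)

lemma rpow_le_sum_tailSum_rpow {s : ℝ} (hs : 0 ≤ s) (n : ℕ) :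
    (C * τ / (τ - 1)) ^ (-s) * ((n : ℝ) / 2) ^ ((τ - 1) * s + 1) ≤
      ∑ i ∈ Icc 1 n, tailSum p i ^ (-s) := by
  calc (C * τ / (τ - 1)) ^ (-s) * ((n : ℝ) / 2) ^ ((τ - 1) * s + 1)
      ≤ (C * τ / (τ - 1)) ^ (-s) * ∑ i ∈ Icc 1 n, (i : ℝ) ^ ((τ - 1) * s) := by
        gcongr
        exact half_rpow_le_sum_Icc_rpow (by nlinarith) n
    _ ≤ ∑ i ∈ Icc 1 n, tailSum p i ^ (-s) := by
        rw [mul_sum]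
        gcongr with i hi
        exact rpow_le_tailSum_rpow hτ hC hp hs (by simp at hi; omega)

end PowerLaw

lemma not_summable_sum_tailSum_rpow_mul {τ C s : ℝ} {p : ℕ → ℝ} (hτ : 1 < τ) (hC : 0 < C)
    (hp : ∀ n : ℕ, 1 ≤ n → p n = C * (n : ℝ) ^ (-τ)) (hs : 0 ≤ s) (hτs : τ - 2 ≤ (τ - 1) * s) :
    ¬ Summable fun n : ℕ => (∑ i ∈ Icc 1 n, tailSum p i ^ (-s)) * p n := by
  intro hS
  set K := (C * τ / (τ - 1)) ^ (-s)
  have hB : 0 < K * C / 2 ^ ((τ - 1) * s + 1) := by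
    have : 0 < C * τ / (τ - 1) := div_pos (by positivity) (by linarith)
    positivity
  have hbound : ∀ n : ℕ, K * C / 2 ^ ((τ - 1) * s + 1) * (n : ℝ)⁻¹ ≤
      (∑ i ∈ Icc 1 n, tailSum p i ^ (-s)) * p n := by
    intro n
    rcases Nat.eq_zero_or_pos n with rfl | hn
    · simp
    have hn' : (1 : ℝ) ≤ n := by exact_mod_cast hn
    calc K * C / 2 ^ ((τ - 1) * s + 1) * (n : ℝ)⁻¹
        = K * C / 2 ^ ((τ - 1) * s + 1) * (n : ℝ) ^ (-1 : ℝ) := by rw [rpow_neg_one]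
      _ ≤ K * C / 2 ^ ((τ - 1) * s + 1) * (n : ℝ) ^ ((τ - 1) * s + 1 - τ) :=
        mul_le_mul_of_nonneg_left (rpow_le_rpow_of_exponent_le hn' (by linarith)) hB.le
      _ = K * ((n : ℝ) / 2) ^ ((τ - 1) * s + 1) * (C * (n : ℝ) ^ (-τ)) := by
        rw [div_rpow (by positivity) zero_le_two, rpow_sub (by positivity),
          rpow_neg (by positivity)]
        field_simp
      _ ≤ (∑ i ∈ Icc 1 n, tailSum p i ^ (-s)) * p n := by
        rw [hp n hn]
        gcongr
        exact rpow_le_sum_tailSum_rpow hτ hC hp hs n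
  exact not_summable_natCast_inv <| (summable_mul_left_iff hB.ne').mp <|
    hS.of_nonneg_of_le (fun n => by positivity) hbound

theorem stmt13_general (d : ℕ) (hd : 2 ≤ d) (τ : ℝ) (hτ : 1 < τ)
    (hτ2 : τ ≤ (2 * (d : ℝ) - 1) / ((d : ℝ) - 1))
    (C : ℝ) (hC : 0 < C)
    (p : ℕ → ℝ) (hp : ∀ n : ℕ, 1 ≤ n → p n = C * (n : ℝ) ^ (-τ)) :
    ¬ Summable (fun n : ℕ =>
      (∑ i ∈ Finset.Icc 1 n,
          (∑' k : ℕ, if i ≤ k then p k else 0) ^ (-(1 : ℝ) / d)) * p n) := by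
  have hd' : (2 : ℝ) ≤ d := by exact_mod_cast hd
  have hτs : τ - 2 ≤ (τ - 1) * (1 / d) := by
    rw [le_div_iff₀ (by linarith)] at hτ2
    rw [← div_eq_mul_one_div, le_div_iff₀ (by linarith)]
    linarith
  simpa only [tailSum, neg_div] using
    not_summable_sum_tailSum_rpow_mul hτ hC hp (by positivity) hτs

/-- Let `p_n = C n^{-τ}` be a power-law distribution on positive integers with exponent
`τ > 1`, so that `p_{n+} = Σ_{k≥n} p_k` satisfies `p_{n+} ≥ c n^{-(τ-1)}` for a constant
`c > 0`. Then `Σ_{n=1}^∞ (Σ_{i=1}^n p_{i+}^{-1/d}) p_n` diverges whenever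
`τ ≤ (2d-1)/(d-1)` (for `d ≥ 2`). -/
theorem stmt13 (d : ℕ) (hd : 2 ≤ d) (τ : ℝ) (hτ : 1 < τ)
    (hτ2 : τ ≤ (2 * (d : ℝ) - 1) / ((d : ℝ) - 1))
    (C c : ℝ) (hC : 0 < C) (hc : 0 < c)
    (p : ℕ → ℝ) (hp0 : ∀ n, 0 ≤ p n) (hprob : ∑' n, p n = 1)
    (hp : ∀ n : ℕ, 1 ≤ n → p n = C * (n : ℝ) ^ (-τ))
    (htail : ∀ n : ℕ, 1 ≤ n →
      c * (n : ℝ) ^ (-(τ - 1)) ≤ ∑' k : ℕ, if n ≤ k then p k else 0) :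
    ¬ Summable (fun n : ℕ =>
      (∑ i ∈ Finset.Icc 1 n,
          (∑' k : ℕ, if i ≤ k then p k else 0) ^ (-(1 : ℝ) / d)) * p n) :=
  stmt13_general d hd τ hτ hτ2 C hC p hp
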